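/- For every λ ∈ ℂ with Re λ ≥ 0, one has Re R_c(λ) ≤ ∫₁^∞ (9π²/16)·κ²·csch(πκ)² dκ, and moreover ∫₁^∞ (9π²/16)·κ²·csch(πκ)² dκ < 1/100. -/

import Mathlib

open MeasureTheory

/-- The continuous-spectrum part of the reduced Evans-function expression. -/
noncomputable def Rc (z : ℂ) : ℂ :=
  ∫ κ in Set.Ioi (1 : ℝ),
    (((9 * Real.pi ^ 2 / 16) * κ ^ 4 * (1 + κ ^ 2) ^ 2 /
        ((κ ^ 2 + 9 / 4) * (κ ^ 2 + 1 / 4)) *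
        (1 / Real.sinh (Real.pi * κ)) ^ 2 : ℝ) : ℂ) * (z + (κ : ℂ) ^ 2 + 1)⁻¹

/-! For `Re z ≥ 0` we have `|z + κ² + 1| ≥ κ² + 1`, and the rational factor
`κ⁴(1+κ²)²/((κ²+9/4)(κ²+1/4))` is at most `κ²(κ²+1)`; hence the integrand of `Rc z` is bounded in
norm by `(9π²/16) κ² csch²(πκ)`. On `[1, ∞)` the bounds `κ² ≤ e^{2κ-2}` and
`sinh(πκ) ≥ e^{πκ}(1 - e^{-2π})/2` dominate the latter by an exponential whose integral is
`9π² e^{-2π} / (4 (1 - e^{-2π})² (2π - 2)) ≈ 0.0097`, which `e^{2π} > 530` pins below `1/100`. -/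

open Real Set

lemma exp_mul_one_sub_exp_le_two_mul_sinh {a x : ℝ} (h : a ≤ x) :
    exp x * (1 - exp (-(2 * a))) ≤ 2 * sinh x := by
  have hexp : exp (-(2 * x)) ≤ exp (-(2 * a)) := exp_le_exp.mpr (by linarith)
  have hsinh : 2 * sinh x = exp x * (1 - exp (-(2 * x))) := by
    rw [sinh_eq, mul_sub, ← exp_add]; ring_nf
  rw [hsinh]
  exact mul_le_mul_of_nonneg_left (by linarith) (exp_pos x).le

lemma one_div_sinh_sq_le {a x : ℝ} (ha : 0 < a) (h : a ≤ x) :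
    (1 / sinh x) ^ 2 ≤ 4 * exp (-(2 * x)) / (1 - exp (-(2 * a))) ^ 2 := by
  have hq : 0 < 1 - exp (-(2 * a)) := sub_pos.mpr (exp_lt_one_iff.mpr (by linarith))
  have hsinh := exp_mul_one_sub_exp_le_two_mul_sinh h
  have hpos : 0 < exp x * (1 - exp (-(2 * a))) := by positivity
  calc (1 / sinh x) ^ 2 ≤ (2 / (exp x * (1 - exp (-(2 * a))))) ^ 2 := by
        refine pow_le_pow_left₀ (one_div_nonneg.mpr (by linarith)) ?_ 2
        rw [div_le_div_iff₀ (by linarith) hpos]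
        linarith
    _ = 4 * exp (-(2 * x)) / (1 - exp (-(2 * a))) ^ 2 := by
        have hexp : exp (-(2 * x)) = (exp x ^ 2)⁻¹ := by
          rw [← exp_nat_mul, ← exp_neg]; push_cast; ring_nf
        rw [hexp]
        field_simp
        norm_num

lemma sq_le_exp_two_mul_sub_two {x : ℝ} (hx : 0 ≤ x) : x ^ 2 ≤ exp (2 * x - 2) := by
  have h : x ≤ exp (x - 1) := by linarith [add_one_le_exp (x - 1)]
  calc x ^ 2 ≤ exp (x - 1) ^ 2 := by gcongr
    _ = exp (2 * x - 2) := by rw [← exp_nat_mul]; ring_nf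

noncomputable def cschMajorant (κ : ℝ) : ℝ := 9 * π ^ 2 / 16 * κ ^ 2 * (1 / sinh (π * κ)) ^ 2

noncomputable def cschMajorantCoeff : ℝ := 9 * π ^ 2 / 4 * exp (-2) / (1 - exp (-(2 * π))) ^ 2

lemma cschMajorant_nonneg (κ : ℝ) : 0 ≤ cschMajorant κ := by
  unfold cschMajorant; positivity

lemma cschMajorant_le_exp {κ : ℝ} (hκ : 1 ≤ κ) :
    cschMajorant κ ≤ cschMajorantCoeff * exp ((2 - 2 * π) * κ) := by
  have hsq := sq_le_exp_two_mul_sub_two (zero_le_one.trans hκ)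
  have hcsch := one_div_sinh_sq_le pi_pos (le_mul_of_one_le_right pi_pos.le hκ)
  have hexp : exp (2 * κ - 2) * exp (-(2 * (π * κ))) = exp (-2) * exp ((2 - 2 * π) * κ) := by
    rw [← exp_add, ← exp_add]; ring_nf
  calc cschMajorant κ
      ≤ 9 * π ^ 2 / 16 * exp (2 * κ - 2) *
          (4 * exp (-(2 * (π * κ))) / (1 - exp (-(2 * π))) ^ 2) := by
        unfold cschMajorant; gcongr
    _ = cschMajorantCoeff * exp ((2 - 2 * π) * κ) := by
        unfold cschMajorantCoeff
        linear_combination 9 * π ^ 2 / 4 / (1 - exp (-(2 * π))) ^ 2 * hexp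

lemma integrableOn_cschMajorant : IntegrableOn cschMajorant (Ioi 1) := by
  have ha : 2 - 2 * π < 0 := by linarith [pi_gt_three]
  refine Integrable.mono' ((integrableOn_exp_mul_Ioi ha 1).const_mul cschMajorantCoeff)
    (by unfold cschMajorant; fun_prop) ?_
  refine (ae_restrict_iff' measurableSet_Ioi).mpr (Filter.Eventually.of_forall fun κ hκ => ?_)
  rw [norm_of_nonneg (cschMajorant_nonneg κ)]
  exact cschMajorant_le_exp (le_of_lt hκ)

lemma integral_cschMajorant_le :
    ∫ κ in Ioi 1, cschMajorant κ ≤ cschMajorantCoeff * (exp (2 - 2 * π) / (2 * π - 2)) := by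
  have ha : 2 - 2 * π < 0 := by linarith [pi_gt_three]
  have hexp : ∫ κ in Ioi 1, exp ((2 - 2 * π) * κ) = exp (2 - 2 * π) / (2 * π - 2) := by
    rw [integral_exp_mul_Ioi ha, mul_one, neg_div, ← div_neg, neg_sub]
  rw [← hexp, ← integral_const_mul]
  exact setIntegral_mono_on integrableOn_cschMajorant
    ((integrableOn_exp_mul_Ioi ha 1).const_mul _) measurableSet_Ioi
    fun κ hκ => cschMajorant_le_exp (le_of_lt hκ)

lemma exp_two_pi_gt : 530 < exp (2 * π) := by
  have hπ : 6.283184 < 2 * π := by linarith [pi_gt_d6]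
  have he : 2.7182818283 < exp 1 := exp_one_gt_d9
  have hr := quadratic_le_exp_of_nonneg (show (0 : ℝ) ≤ 0.283184 by norm_num)
  calc (530 : ℝ) < 2.7182818283 ^ 6 * (1 + 0.283184 + 0.283184 ^ 2 / 2) := by norm_num
    _ ≤ exp 1 ^ 6 * exp 0.283184 := by gcongr
    _ = exp 6.283184 := by rw [← exp_nat_mul, ← exp_add]; norm_num
    _ < exp (2 * π) := exp_lt_exp.mpr hπ

lemma cschMajorantCoeff_mul_exp_div_lt :
    cschMajorantCoeff * (exp (2 - 2 * π) / (2 * π - 2)) < 1 / 100 := by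
  have hq : exp (-2) * exp (2 - 2 * π) = exp (-(2 * π)) := by rw [← exp_add]; ring_nf
  have hq_lt : exp (-(2 * π)) < 1 / 530 := by
    rw [exp_neg, inv_lt_comm₀ (exp_pos _) (by norm_num)]; simpa using exp_two_pi_gt
  have hq_pos := exp_pos (-(2 * π))
  have hπl := pi_lt_d6
  have hπg := pi_gt_d6
  have h1q : 1 - exp (-(2 * π)) ≠ 0 := by linarith
  have hb : 2 * π - 2 ≠ 0 := by linarith
  calc cschMajorantCoeff * (exp (2 - 2 * π) / (2 * π - 2))
      = 9 * π ^ 2 * (exp (-2) * exp (2 - 2 * π)) /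
          (4 * (1 - exp (-(2 * π))) ^ 2 * (2 * π - 2)) := by
        unfold cschMajorantCoeff; field_simp
    _ = 9 * π ^ 2 * exp (-(2 * π)) / (4 * (1 - exp (-(2 * π))) ^ 2 * (2 * π - 2)) := by
        rw [hq]
    _ < 1 / 100 := by
        rw [div_lt_div_iff₀ (by nlinarith) (by norm_num)]
        generalize exp (-(2 * π)) = q at *
        nlinarith [mul_pos hq_pos (sub_pos.mpr hπl)]

-- `Rc z` is `∫ κ in Ioi 1, (rcWeight κ : ℂ) * (z + κ ^ 2 + 1)⁻¹` by definition.
noncomputable def rcWeight (κ : ℝ) : ℝ :=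
  (9 * π ^ 2 / 16) * κ ^ 4 * (1 + κ ^ 2) ^ 2 / ((κ ^ 2 + 9 / 4) * (κ ^ 2 + 1 / 4)) *
    (1 / sinh (π * κ)) ^ 2

lemma rcWeight_nonneg (κ : ℝ) : 0 ≤ rcWeight κ := by
  unfold rcWeight; positivity

lemma rcWeight_le (κ : ℝ) : rcWeight κ ≤ (κ ^ 2 + 1) * cschMajorant κ := by
  have hrat : κ ^ 4 * (1 + κ ^ 2) ^ 2 / ((κ ^ 2 + 9 / 4) * (κ ^ 2 + 1 / 4)) ≤
      (κ ^ 2 + 1) * κ ^ 2 := by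
    rw [div_le_iff₀ (by positivity)]
    nlinarith [mul_nonneg (sq_nonneg κ) (sq_nonneg κ), pow_nonneg (sq_nonneg κ) 3]
  calc rcWeight κ
      = 9 * π ^ 2 / 16 * (1 / sinh (π * κ)) ^ 2 *
          (κ ^ 4 * (1 + κ ^ 2) ^ 2 / ((κ ^ 2 + 9 / 4) * (κ ^ 2 + 1 / 4))) := by
        unfold rcWeight; ring
    _ ≤ 9 * π ^ 2 / 16 * (1 / sinh (π * κ)) ^ 2 * ((κ ^ 2 + 1) * κ ^ 2) := by gcongr
    _ = (κ ^ 2 + 1) * cschMajorant κ := by unfold cschMajorant; ring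

lemma norm_inv_add_ofReal_le {z : ℂ} (hz : 0 ≤ z.re) {a : ℝ} (ha : 0 < a) :
    ‖(z + a)⁻¹‖ ≤ a⁻¹ := by
  have hre : a ≤ ‖z + a‖ := by
    calc a ≤ (z + a).re := by simp [hz]
      _ ≤ ‖z + a‖ := Complex.re_le_norm _
  rw [norm_inv]
  exact inv_anti₀ ha hre

lemma norm_rcIntegrand_le {z : ℂ} (hz : 0 ≤ z.re) (κ : ℝ) :
    ‖(rcWeight κ : ℂ) * (z + (κ : ℂ) ^ 2 + 1)⁻¹‖ ≤ cschMajorant κ := by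
  have hpos : 0 < κ ^ 2 + 1 := by positivity
  have hinv : ‖(z + (κ : ℂ) ^ 2 + 1)⁻¹‖ ≤ (κ ^ 2 + 1)⁻¹ := by
    simpa [add_assoc] using norm_inv_add_ofReal_le hz hpos
  rw [norm_mul, Complex.norm_real, norm_of_nonneg (rcWeight_nonneg κ)]
  calc rcWeight κ * ‖(z + (κ : ℂ) ^ 2 + 1)⁻¹‖ ≤ rcWeight κ * (κ ^ 2 + 1)⁻¹ := by
        gcongr; exact rcWeight_nonneg κ
    _ ≤ cschMajorant κ := by
        rw [← div_eq_mul_inv, div_le_iff₀ hpos, mul_comm]; exact rcWeight_le κ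

lemma re_Rc_le {z : ℂ} (hz : 0 ≤ z.re) : (Rc z).re ≤ ∫ κ in Ioi 1, cschMajorant κ := by
  have hint : IntegrableOn (fun κ : ℝ => (rcWeight κ : ℂ) * (z + (κ : ℂ) ^ 2 + 1)⁻¹) (Ioi 1) :=
    Integrable.mono' integrableOn_cschMajorant (by unfold rcWeight; fun_prop)
      (Filter.Eventually.of_forall (norm_rcIntegrand_le hz))
  calc (Rc z).re = ∫ κ in Ioi 1, ((rcWeight κ : ℂ) * (z + (κ : ℂ) ^ 2 + 1)⁻¹).re :=
        (integral_re hint).symm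
    _ ≤ ∫ κ in Ioi 1, cschMajorant κ :=
        setIntegral_mono_on hint.re integrableOn_cschMajorant measurableSet_Ioi
          fun κ _ => (RCLike.re_le_norm _).trans (norm_rcIntegrand_le hz κ)

/-- For `Re λ ≥ 0`, `Re R_c(λ)` is bounded by `∫₁^∞ (9π²/16) κ² csch(πκ)² dκ`,
and this integral is less than `1/100`. -/
theorem stmt13 :
    (∀ z : ℂ, 0 ≤ z.re →
      (Rc z).re ≤ ∫ κ in Set.Ioi (1 : ℝ),
        (9 * Real.pi ^ 2 / 16) * κ ^ 2 * (1 / Real.sinh (Real.pi * κ)) ^ 2) ∧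
      (∫ κ in Set.Ioi (1 : ℝ),
        (9 * Real.pi ^ 2 / 16) * κ ^ 2 * (1 / Real.sinh (Real.pi * κ)) ^ 2)
        < 1 / 100 :=
  ⟨fun _ hz => re_Rc_le hz, integral_cschMajorant_le.trans_lt cschMajorantCoeff_mul_exp_div_lt⟩
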